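/- arXiv:2206.04639 — 2 statements merged into one kernel-verified Lean document; each statement's English description precedes it below -/
import Mathlib

section
/- Let 1 ≤ k < l ≤ n and let κ ∈ ℝⁿ satisfy H_j(κ) > 0 for all 1 ≤ j ≤ l, where H_j(κ) = σ_j(κ)/C(n,j) is the normalized j-th elementary symmetric polynomial. Then H_k(κ) · H_{l-1}(κ) ≥ H_{k-1}(κ) · H_l(κ), with equality if and only if κ = λ(1,…,1) for some λ > 0. -/
/-!
Newton's inequalities `H_j H_{j+2} ≤ H_{j+1}²` hold for the roots of every real-rooted
polynomial. By Rolle's theorem the derivative of `∏ (X - a)` is again real-rooted, and Vieta's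
formulas show that it has the same means `H_i` for `i` below its degree; so one may assume there
are `j + 2` roots. Inverting the roots exchanges `H_i` and `H_{j+2-i}` up to the factor `∏ a`,
which turns the inequality into `H_2 ≤ H_1²`; its defect is the variance of the roots, so
equality forces all roots to be equal.

On the Gårding cone all `H_j` with `j ≤ l` are positive, so Newton's inequalities say that
`H_{j+1} / H_j` is nonincreasing for `j < l`, which is the claim. Equality makes this ratio
constant between `k - 1` and `l - 1`, hence gives equality in Newton's inequality at `k - 1`.
-/

open Finset

noncomputable def esymmOn {n : ℕ} (s : Finset (Fin n)) (k : ℕ) (κ : Fin n → ℝ) : ℝ :=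
  ∑ A ∈ Finset.powersetCard k s, ∏ i ∈ A, κ i

noncomputable def esymm {n : ℕ} (k : ℕ) (κ : Fin n → ℝ) : ℝ :=
  esymmOn Finset.univ k κ

/-- Normalized k-th elementary symmetric polynomial H_k = σ_k / C(n,k). -/
noncomputable def Hnorm {n : ℕ} (k : ℕ) (κ : Fin n → ℝ) : ℝ :=
  esymm k κ / (n.choose k : ℝ)

namespace Multiset

section Esymm

variable {R : Type*} [CommSemiring R]

theorem esymm_zero (s : Multiset R) : s.esymm 0 = 1 := by
  simp [esymm]

theorem esymm_one (s : Multiset R) : s.esymm 1 = s.sum := by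
  simp [esymm, powersetCard_one]

theorem esymm_cons_succ (a : R) (s : Multiset R) (j : ℕ) :
    (a ::ₘ s).esymm (j + 1) = s.esymm (j + 1) + a * s.esymm j := by
  simp [esymm, powersetCard_cons, sum_map_mul_left, map_map]

theorem esymm_eq_zero_of_card_lt {s : Multiset R} {j : ℕ} (h : card s < j) : s.esymm j = 0 := by
  simp [esymm, powersetCard_eq_empty _ h]

theorem esymm_card (s : Multiset R) : s.esymm (card s) = s.prod := by
  induction s using Multiset.induction with
  | empty => simp [esymm]
  | cons a s ih =>
    rw [card_cons, esymm_cons_succ, ih, esymm_eq_zero_of_card_lt (Nat.lt_succ_self _), prod_cons,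
      zero_add]

theorem esymm_replicate (n j : ℕ) (c : R) : (replicate n c).esymm j = n.choose j * c ^ j := by
  induction n generalizing j with
  | zero => cases j <;> simp [esymm, powersetCard_zero_right]
  | succ n ih =>
    cases j with
    | zero => simp [esymm_zero]
    | succ j =>
      rw [replicate_succ, esymm_cons_succ, ih, ih, Nat.choose_succ_succ']
      push_cast
      ring

theorem sq_sum_eq_sum_sq_add_two_mul_esymm_two (s : Multiset R) :
    s.sum ^ 2 = (s.map (· ^ 2)).sum + 2 * s.esymm 2 := by
  induction s using Multiset.induction with
  | empty => simp [esymm_eq_zero_of_card_lt (s := (0 : Multiset R)) (j := 2) (by simp)]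
  | cons a s ih =>
    rw [sum_cons, map_cons, sum_cons, esymm_cons_succ, esymm_one, add_sq, ih]
    ring

end Esymm

theorem esymm_eq_prod_mul_esymm_inv {K : Type*} [Field K] {s : Multiset K}
    (hs : ∀ a ∈ s, a ≠ 0) {i j : ℕ} (hij : i + j = card s) :
    s.esymm j = s.prod * (s.map (·⁻¹)).esymm i := by
  induction s using Multiset.induction generalizing i j with
  | empty =>
    obtain ⟨rfl, rfl⟩ : i = 0 ∧ j = 0 := by simpa using hij
    simp [esymm_zero]
  | cons a s ih =>
    have ha : a ≠ 0 := hs a (mem_cons_self a s)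
    have ih' : ∀ {i j : ℕ}, i + j = card s → s.esymm j = s.prod * (s.map (·⁻¹)).esymm i :=
      ih fun b hb => hs b (mem_cons_of_mem hb)
    rw [card_cons] at hij
    rw [map_cons, prod_cons]
    rcases i with _ | i <;> rcases j with _ | j
    · omega
    · rw [esymm_cons_succ, esymm_eq_zero_of_card_lt (j := j + 1) (by omega),
        ih' (i := 0) (j := j) (by omega)]
      simp [esymm_zero]
    · have hinv : (s.map (·⁻¹)).esymm (i + 1) = 0 := esymm_eq_zero_of_card_lt (by simp; omega)
      have htop : 1 = s.prod * (s.map (·⁻¹)).esymm i := by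
        rw [← ih' (j := 0) (by omega), esymm_zero]
      rw [esymm_cons_succ, hinv, esymm_zero]
      linear_combination htop - s.prod * (s.map (·⁻¹)).esymm i * mul_inv_cancel₀ ha
    · rw [esymm_cons_succ, esymm_cons_succ, ih' (i := i) (by omega), ih' (i := i + 1) (by omega)]
      field_simp
      ring

section Mean

variable {K : Type*} [Field K]

noncomputable def esymmMean (s : Multiset K) (j : ℕ) : K :=
  s.esymm j / (card s).choose j

theorem esymmMean_zero (s : Multiset K) : s.esymmMean 0 = 1 := by
  simp [esymmMean, esymm_zero]

theorem esymmMean_card (s : Multiset K) : s.esymmMean (card s) = s.prod := by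
  simp [esymmMean, esymm_card]

theorem esymmMean_replicate [CharZero K] {n j : ℕ} (hj : j ≤ n) (c : K) :
    (replicate n c).esymmMean j = c ^ j := by
  have : (n.choose j : K) ≠ 0 := Nat.cast_ne_zero.2 (Nat.choose_pos hj).ne'
  rw [esymmMean, esymm_replicate, card_replicate]
  field_simp

theorem esymmMean_eq_prod_mul_esymmMean_inv {s : Multiset K} (hs : ∀ a ∈ s, a ≠ 0) {i j : ℕ}
    (hij : i + j = card s) : s.esymmMean j = s.prod * (s.map (·⁻¹)).esymmMean i := by
  rw [esymmMean, esymmMean, card_map, esymm_eq_prod_mul_esymm_inv hs hij,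
    Nat.choose_symm_of_eq_add hij.symm, mul_div_assoc]

theorem sum_map_sub_sq (s : Multiset K) (c : K) :
    (s.map fun a => (a - c) ^ 2).sum = (s.map (· ^ 2)).sum - 2 * c * s.sum + card s * c ^ 2 := by
  induction s using Multiset.induction with
  | empty => simp
  | cons a s ih =>
    simp only [map_cons, sum_cons, card_cons, ih]
    push_cast
    ring

variable [LinearOrder K] [IsStrictOrderedRing K]

theorem sq_esymmMean_one_sub_esymmMean_two {s : Multiset K} (hs : 2 ≤ card s) :
    s.esymmMean 1 ^ 2 - s.esymmMean 2 =
      (s.map fun a => (a - s.esymmMean 1) ^ 2).sum / (card s * (card s - 1)) := by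
  have hn : (2 : K) ≤ card s := by exact_mod_cast hs
  have hn0 : (card s : K) ≠ 0 := by positivity
  have hn1 : (card s : K) - 1 ≠ 0 := by linarith
  have hsq := sq_sum_eq_sum_sq_add_two_mul_esymm_two s
  rw [sum_map_sub_sq, esymmMean, esymmMean, esymm_one, Nat.choose_one_right, Nat.cast_choose_two]
  field_simp
  linear_combination (card s : K) * hsq

theorem esymmMean_two_le_sq {s : Multiset K} (hs : 2 ≤ card s) :
    s.esymmMean 2 ≤ s.esymmMean 1 ^ 2 := by
  have hn : (2 : K) ≤ card s := by exact_mod_cast hs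
  have hsum : 0 ≤ (s.map fun a => (a - s.esymmMean 1) ^ 2).sum :=
    sum_nonneg fun x hx => by obtain ⟨a, -, rfl⟩ := mem_map.1 hx; positivity
  have : 0 ≤ s.esymmMean 1 ^ 2 - s.esymmMean 2 := by
    rw [sq_esymmMean_one_sub_esymmMean_two hs]
    exact div_nonneg hsum (by nlinarith)
  linarith

theorem eq_replicate_of_esymmMean_two_eq_sq {s : Multiset K} (hs : 2 ≤ card s)
    (h : s.esymmMean 2 = s.esymmMean 1 ^ 2) : s = replicate (card s) (s.esymmMean 1) := by
  have hn : (2 : K) ≤ card s := by exact_mod_cast hs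
  have hzero : (s.map fun a => (a - s.esymmMean 1) ^ 2).sum = 0 := by
    have := sq_esymmMean_one_sub_esymmMean_two hs
    rw [h, sub_self, eq_comm, div_eq_zero_iff] at this
    exact this.resolve_right (by nlinarith)
  refine eq_replicate.2 ⟨rfl, fun a ha => ?_⟩
  have := all_zero_of_le_zero_le_of_sum_eq_zero
    (fun x hx => by obtain ⟨b, -, rfl⟩ := mem_map.1 hx; positivity) hzero _
    (mem_map_of_mem _ ha)
  simpa [sub_eq_zero] using this

theorem esymmMean_mul_le_sq_of_card_eq {s : Multiset K} {j : ℕ} (hs : card s = j + 2) :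
    s.esymmMean j * s.esymmMean (j + 2) ≤ s.esymmMean (j + 1) ^ 2 := by
  by_cases hP : s.prod = 0
  · rw [← hs, esymmMean_card, hP, mul_zero]
    positivity
  have hnz : ∀ a ∈ s, a ≠ 0 := fun a ha h0 => hP (prod_eq_zero (h0 ▸ ha))
  have hv : 2 ≤ card (s.map (·⁻¹)) := by simp [hs]
  rw [esymmMean_eq_prod_mul_esymmMean_inv hnz (i := 2) (j := j) (by omega),
    esymmMean_eq_prod_mul_esymmMean_inv hnz (i := 1) (j := j + 1) (by omega), ← hs,
    esymmMean_card]
  calc _ = s.prod ^ 2 * (s.map (·⁻¹)).esymmMean 2 := by ring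
    _ ≤ s.prod ^ 2 * (s.map (·⁻¹)).esymmMean 1 ^ 2 := by gcongr; exact esymmMean_two_le_sq hv
    _ = _ := by ring

theorem exists_eq_replicate_of_card_eq_of_esymmMean_mul_eq_sq {s : Multiset K} {j : ℕ}
    (hs : card s = j + 2) (h : s.esymmMean j * s.esymmMean (j + 2) = s.esymmMean (j + 1) ^ 2)
    (hne : s.esymmMean (j + 2) ≠ 0) : ∃ c, s = replicate (card s) c := by
  rw [← hs, esymmMean_card] at hne
  have hnz : ∀ a ∈ s, a ≠ 0 := fun a ha h0 => hne (prod_eq_zero (h0 ▸ ha))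
  rw [esymmMean_eq_prod_mul_esymmMean_inv hnz (i := 2) (j := j) (by omega),
    esymmMean_eq_prod_mul_esymmMean_inv hnz (i := 1) (j := j + 1) (by omega), ← hs,
    esymmMean_card] at h
  set v := s.map (·⁻¹)
  have hv2 : 2 ≤ card v := by simp [v, hs]
  have hvsq : v.esymmMean 2 = v.esymmMean 1 ^ 2 :=
    mul_left_cancel₀ (pow_ne_zero 2 hne) (by linear_combination h)
  set d := v.esymmMean 1
  have hrep : v = replicate (card s) d := by
    simpa [v] using eq_replicate_of_esymmMean_two_eq_sq hv2 hvsq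
  refine ⟨d⁻¹, ?_⟩
  calc s = v.map (·⁻¹) := by simp [v, map_map]
    _ = replicate (card s) d⁻¹ := by rw [hrep, map_replicate]

end Mean

end Multiset

open Polynomial

theorem Polynomial.Splits.derivative_of_real {p : ℝ[X]} (hp : p.Splits) :
    p.derivative.Splits := by
  rw [splits_iff_card_roots] at hp ⊢
  refine le_antisymm (card_roots' _) ?_
  have := card_roots_le_derivative p
  rw [natDegree_derivative]
  omega

namespace Multiset

theorem splits_prod_X_sub_C (s : Multiset ℝ) : (s.map (X - C ·)).prod.Splits :=
  Splits.multisetProd fun _ hf => by obtain ⟨a, -, rfl⟩ := mem_map.1 hf; exact Splits.X_sub_C a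

theorem card_roots_derivative_prod_X_sub_C (s : Multiset ℝ) :
    card (derivative (s.map (X - C ·)).prod).roots = card s - 1 := by
  rw [splits_iff_card_roots.1 (splits_prod_X_sub_C s).derivative_of_real, natDegree_derivative,
    natDegree_multiset_prod_X_sub_C_eq_card]

-- Vieta for `p` and for `p'`, compared at the coefficient of `X ^ (m - j)` of `p'`.
theorem card_mul_esymm_roots_derivative_prod_X_sub_C {s : Multiset ℝ} {m j : ℕ}
    (hs : card s = m + 1) (hj : j ≤ m) :
    (m + 1 : ℝ) * (derivative (s.map (X - C ·)).prod).roots.esymm j =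
      (m + 1 - j) * s.esymm j := by
  set p := (s.map (X - C ·)).prod
  have hpdeg : p.natDegree = m + 1 := by rw [natDegree_multiset_prod_X_sub_C_eq_card, hs]
  have hplead : p.leadingCoeff = 1 :=
    (monic_multiset_prod_of_monic _ _ fun a _ => monic_X_sub_C a).leadingCoeff
  have hq := coeff_eq_esymm_roots_of_splits (splits_prod_X_sub_C s).derivative_of_real
    (k := m - j) (by rw [natDegree_derivative, hpdeg]; omega)
  rw [coeff_derivative, prod_X_sub_C_coeff s (by omega), leadingCoeff_derivative, hplead,
    natDegree_derivative, hpdeg, hs, show m + 1 - (m - j + 1) = j by omega,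
    show m + 1 - 1 - (m - j) = j by omega, Nat.cast_sub hj] at hq
  push_cast at hq
  have hsign : ((-1 : ℝ) ^ j) ≠ 0 := by positivity
  apply mul_left_cancel₀ hsign
  linear_combination -hq

theorem esymmMean_roots_derivative_prod_X_sub_C {s : Multiset ℝ} {j : ℕ} (hj : j < card s) :
    (derivative (s.map (X - C ·)).prod).roots.esymmMean j = s.esymmMean j := by
  obtain ⟨m, hm⟩ : ∃ m, card s = m + 1 := ⟨card s - 1, by omega⟩
  have key := card_mul_esymm_roots_derivative_prod_X_sub_C hm (j := j) (by omega)
  have hchoose : (m.choose j : ℝ) * (m + 1) = (m + 1).choose j * (m + 1 - j) := by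
    have := congrArg (Nat.cast : ℕ → ℝ) (Nat.choose_mul_succ_eq m j)
    push_cast [Nat.cast_sub (show j ≤ m + 1 by omega)] at this
    exact this
  have h1 : (m.choose j : ℝ) ≠ 0 := Nat.cast_ne_zero.2 (Nat.choose_pos (by omega)).ne'
  have h2 : ((m + 1).choose j : ℝ) ≠ 0 := Nat.cast_ne_zero.2 (Nat.choose_pos (by omega)).ne'
  rw [esymmMean, esymmMean, card_roots_derivative_prod_X_sub_C, hm, Nat.add_sub_cancel,
    div_eq_div_iff h1 h2]
  apply mul_left_cancel₀ (show (m + 1 : ℝ) ≠ 0 by positivity)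
  linear_combination ((m + 1).choose j : ℝ) * key - s.esymm j * hchoose

theorem exists_card_eq_esymmMean_eq (s : Multiset ℝ) {m : ℕ} (hm : m ≤ card s) :
    ∃ t : Multiset ℝ, card t = m ∧ ∀ j ≤ m, t.esymmMean j = s.esymmMean j := by
  obtain ⟨d, hd⟩ := Nat.exists_eq_add_of_le hm
  induction d generalizing s with
  | zero => exact ⟨s, hd, fun _ _ => rfl⟩
  | succ d ih =>
    obtain ⟨t, ht, htj⟩ := ih (derivative (s.map (X - C ·)).prod).roots
      (by rw [card_roots_derivative_prod_X_sub_C]; omega)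
      (by rw [card_roots_derivative_prod_X_sub_C]; omega)
    exact ⟨t, ht, fun j hj =>
      (htj j hj).trans (esymmMean_roots_derivative_prod_X_sub_C (by omega))⟩

theorem esymmMean_mul_le_sq (s : Multiset ℝ) {j : ℕ} (hj : j + 2 ≤ card s) :
    s.esymmMean j * s.esymmMean (j + 2) ≤ s.esymmMean (j + 1) ^ 2 := by
  obtain ⟨t, ht, htj⟩ := exists_card_eq_esymmMean_eq s hj
  rw [← htj j (by omega), ← htj (j + 1) (by omega), ← htj (j + 2) le_rfl]
  exact esymmMean_mul_le_sq_of_card_eq ht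

theorem eq_replicate_of_esymmMean_mul_eq_sq (s : Multiset ℝ) {j : ℕ} (hj : j + 2 ≤ card s)
    (h : s.esymmMean j * s.esymmMean (j + 2) = s.esymmMean (j + 1) ^ 2)
    (hne : s.esymmMean (j + 2) ≠ 0) : s = replicate (card s) (s.esymmMean 1) := by
  obtain ⟨t, ht, htj⟩ := exists_card_eq_esymmMean_eq s hj
  rw [← htj j (by omega), ← htj (j + 1) (by omega), ← htj (j + 2) le_rfl] at h
  rw [← htj (j + 2) le_rfl] at hne
  obtain ⟨c, hc⟩ := exists_eq_replicate_of_card_eq_of_esymmMean_mul_eq_sq ht h hne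
  apply eq_replicate_of_esymmMean_two_eq_sq (by omega)
  rw [← htj 1 (by omega), ← htj 2 (by omega), hc, esymmMean_replicate (by omega),
    esymmMean_replicate (by omega), pow_one]

end Multiset

section LogConcave

variable {K : Type*} [Field K] [LinearOrder K] [IsStrictOrderedRing K] {a : ℕ → K} {N : ℕ}

theorem mul_succ_le_succ_mul_of_mul_le_sq (hpos : ∀ m ≤ N, 0 < a m)
    (hlc : ∀ m, m + 2 ≤ N → a m * a (m + 2) ≤ a (m + 1) ^ 2) {i j : ℕ} (hij : i ≤ j)
    (hj : j + 1 ≤ N) : a i * a (j + 1) ≤ a (i + 1) * a j := by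
  induction j, hij using Nat.le_induction with
  | base => rw [mul_comm]
  | succ j hij ih =>
    refine le_of_mul_le_mul_left ?_ (hpos (j + 1) (by omega))
    calc a (j + 1) * (a i * a (j + 2)) = a i * a (j + 1) * a (j + 2) := by ring
      _ ≤ a (i + 1) * a j * a (j + 2) :=
        mul_le_mul_of_nonneg_right (ih (by omega)) (hpos _ hj).le
      _ = a (i + 1) * (a j * a (j + 2)) := by ring
      _ ≤ a (i + 1) * a (j + 1) ^ 2 :=
        mul_le_mul_of_nonneg_left (hlc j hj) (hpos _ (by omega)).le
      _ = a (j + 1) * (a (i + 1) * a (j + 1)) := by ring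

theorem mul_add_two_eq_sq_of_mul_succ_eq_succ_mul (hpos : ∀ m ≤ N, 0 < a m)
    (hlc : ∀ m, m + 2 ≤ N → a m * a (m + 2) ≤ a (m + 1) ^ 2) {i j : ℕ} (hij : i < j)
    (hj : j + 1 ≤ N) (h : a i * a (j + 1) = a (i + 1) * a j) :
    a i * a (i + 2) = a (i + 1) ^ 2 := by
  refine le_antisymm (hlc i (by omega)) (not_lt.1 fun hlt => ?_)
  refine lt_irrefl (a (i + 1) * (a i * a (j + 1))) ?_
  calc a (i + 1) * (a i * a (j + 1)) = a i * (a (i + 1) * a (j + 1)) := by ring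
    _ ≤ a i * (a (i + 2) * a j) := mul_le_mul_of_nonneg_left
        (mul_succ_le_succ_mul_of_mul_le_sq hpos hlc hij hj) (hpos i (by omega)).le
    _ = a i * a (i + 2) * a j := by ring
    _ < a (i + 1) ^ 2 * a j := mul_lt_mul_of_pos_right hlt (hpos j (by omega))
    _ = a (i + 1) * (a i * a (j + 1)) := by rw [h]; ring

end LogConcave

theorem Hnorm_eq_esymmMean {n : ℕ} (j : ℕ) (κ : Fin n → ℝ) :
    Hnorm j κ = (univ.val.map κ).esymmMean j := by
  rw [Hnorm, esymm, esymmOn, Multiset.esymmMean, Finset.esymm_map_val]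
  simp

/-- Newton–MacLaurin inequality with equality characterization. -/
theorem stmt4 {n k l : ℕ} (κ : Fin n → ℝ) (hk : 1 ≤ k) (hkl : k < l) (hl : l ≤ n)
    (hpos : ∀ j, 1 ≤ j → j ≤ l → 0 < Hnorm j κ) :
    Hnorm k κ * Hnorm (l - 1) κ ≥ Hnorm (k - 1) κ * Hnorm l κ ∧
      (Hnorm k κ * Hnorm (l - 1) κ = Hnorm (k - 1) κ * Hnorm l κ ↔
        ∃ c : ℝ, 0 < c ∧ κ = fun _ => c) := by
  simp only [Hnorm_eq_esymmMean] at hpos ⊢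
  set s := univ.val.map κ with hs
  have hcard : Multiset.card s = n := by simp [s]
  have hpos₀ : ∀ j ≤ l, 0 < s.esymmMean j := by
    rintro (_ | j) hj
    · simp [Multiset.esymmMean_zero]
    · exact hpos _ (by omega) hj
  have hlc : ∀ m, m + 2 ≤ l →
      s.esymmMean m * s.esymmMean (m + 2) ≤ s.esymmMean (m + 1) ^ 2 :=
    fun m hm => s.esymmMean_mul_le_sq (by omega)
  obtain ⟨k, rfl⟩ : ∃ k', k = k' + 1 := ⟨k - 1, by omega⟩
  obtain ⟨l, rfl⟩ : ∃ l', l = l' + 1 := ⟨l - 1, by omega⟩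
  simp only [Nat.add_sub_cancel]
  refine ⟨mul_succ_le_succ_mul_of_mul_le_sq hpos₀ hlc (by omega) le_rfl, fun heq => ?_, ?_⟩
  · have hsq := mul_add_two_eq_sq_of_mul_succ_eq_succ_mul hpos₀ hlc (by omega) le_rfl heq.symm
    have hrep := s.eq_replicate_of_esymmMean_mul_eq_sq (by omega) hsq (hpos₀ _ (by omega)).ne'
    refine ⟨s.esymmMean 1, hpos₀ 1 (by omega), funext fun i => ?_⟩
    have hi : κ i ∈ s := Multiset.mem_map_of_mem κ (mem_univ_val i)
    rw [hrep] at hi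
    exact Multiset.eq_of_mem_replicate hi
  · rintro ⟨c, -, rfl⟩
    have hpow : ∀ j ≤ n, s.esymmMean j = c ^ j := fun j hj => by
      rw [hs, Multiset.map_const', card_val, card_univ, Fintype.card_fin,
        Multiset.esymmMean_replicate hj]
    rw [hpow _ (by omega), hpow _ (by omega), hpow _ (by omega), hpow _ (by omega)]
    ring
end

section
/- For κ in the positive cone Γ_+ = {κ ∈ ℝⁿ : κ_i > 0 for all i} and any 1 ≤ k ≤ n, the function κ ↦ σ_k(κ)/σ_{k-1}(κ) is concave on Γ_+. -/
/-!
Marcus–Lopes induction. With `E_j = σ_j(κ)` and `E_j^i = σ_j(κ | i)` (variable `κ_i` deleted),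
the identities `E_{l+1} = E_{l+1}^i + κ_i E_l^i` and `∑_i κ_i E_{l+1}^i = (l+2) E_{l+2}` give
`E_{l+2} / E_{l+1} = (l+2)⁻¹ ∑_i h(κ_i, E_{l+1}^i / E_l^i)` with `h(x, y) = xy / (x + y)`.
The parallel sum `h` is jointly concave and increasing in each argument on the positive quadrant,
so concavity of the quotients for `κ | i` propagates to `κ`.
-/

open Finset

lemma powersetCard_erase_eq_filter {α : Type*} [DecidableEq α] (s : Finset α) (i : α) (m : ℕ) :
    (s.erase i).powersetCard m = (s.powersetCard m).filter (i ∉ ·) := by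
  ext A
  simp only [mem_powersetCard, mem_filter, subset_erase]
  tauto

section esymmOn

variable {n : ℕ}

lemma esymmOn_zero (s : Finset (Fin n)) (κ : Fin n → ℝ) : esymmOn s 0 κ = 1 := by
  simp [esymmOn]

lemma esymmOn_one (s : Finset (Fin n)) (κ : Fin n → ℝ) : esymmOn s 1 κ = ∑ i ∈ s, κ i := by
  simp [esymmOn, powersetCard_one]

lemma esymmOn_pos {s : Finset (Fin n)} {k : ℕ} (hk : k ≤ s.card) {κ : Fin n → ℝ}
    (hκ : ∀ i, 0 < κ i) : 0 < esymmOn s k κ := by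
  obtain ⟨t, hts, htk⟩ := exists_subset_card_eq hk
  exact sum_pos (fun A _ ↦ prod_pos fun i _ ↦ hκ i) ⟨t, mem_powersetCard.2 ⟨hts, htk⟩⟩

lemma esymmOn_succ_eq_erase {s : Finset (Fin n)} {i : Fin n} (hi : i ∈ s) (m : ℕ)
    (κ : Fin n → ℝ) :
    esymmOn s (m + 1) κ = esymmOn (s.erase i) (m + 1) κ + κ i * esymmOn (s.erase i) m κ := by
  have hi' : i ∉ s.erase i := notMem_erase i s
  have hnot : ∀ B ∈ (s.erase i).powersetCard m, i ∉ B :=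
    fun B hB h ↦ hi' ((mem_powersetCard.1 hB).1 h)
  conv_lhs => rw [← insert_erase hi]
  rw [esymmOn, powersetCard_succ_insert hi', sum_union, sum_image, esymmOn, esymmOn, mul_sum]
  · exact congrArg _ (sum_congr rfl fun B hB ↦ prod_insert (hnot B hB))
  · exact fun B hB C hC hBC ↦ by
      simpa [erase_insert (hnot B hB), erase_insert (hnot C hC)] using congrArg (erase · i) hBC
  · refine disjoint_left.2 fun A hA hA' ↦ ?_
    obtain ⟨B, -, rfl⟩ := mem_image.1 hA'
    exact hi' ((mem_powersetCard.1 hA).1 (mem_insert_self i B))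

lemma mul_esymmOn_erase_eq_sum {s : Finset (Fin n)} {i : Fin n} (hi : i ∈ s) (m : ℕ)
    (κ : Fin n → ℝ) :
    κ i * esymmOn (s.erase i) m κ =
      ∑ A ∈ (s.powersetCard (m + 1)).filter (i ∈ ·), ∏ j ∈ A, κ j := by
  have h := esymmOn_succ_eq_erase hi m κ
  rw [esymmOn, ← sum_filter_add_sum_filter_not _ (i ∈ ·), esymmOn,
    powersetCard_erase_eq_filter] at h
  linarith

lemma sum_mul_esymmOn_erase (s : Finset (Fin n)) (m : ℕ) (κ : Fin n → ℝ) :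
    ∑ i ∈ s, κ i * esymmOn (s.erase i) m κ = (m + 1) * esymmOn s (m + 1) κ := by
  rw [sum_congr rfl fun i hi ↦ mul_esymmOn_erase_eq_sum hi m κ, esymmOn, mul_sum,
    sum_comm' (t' := s.powersetCard (m + 1)) (s' := id)]
  · refine sum_congr rfl fun A hA ↦ ?_
    rw [id, sum_const, (mem_powersetCard.1 hA).2, nsmul_eq_mul]
    push_cast; ring
  · intro i A
    simp only [mem_filter, mem_powersetCard, id]
    exact ⟨fun h ↦ ⟨h.2.2, h.2.1⟩, fun h ↦ ⟨h.2.1 h.1, h.2, h.1⟩⟩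

end esymmOn

noncomputable def parallelSum (x y : ℝ) : ℝ := x * y / (x + y)

lemma parallelSum_comm (x y : ℝ) : parallelSum x y = parallelSum y x := by
  rw [parallelSum, parallelSum, mul_comm, add_comm]

lemma parallelSum_le_parallelSum_right {x y y' : ℝ} (hx : 0 < x) (hy : 0 < y) (hyy' : y ≤ y') :
    parallelSum x y ≤ parallelSum x y' := by
  have hy' : 0 < y' := hy.trans_le hyy'
  rw [parallelSum, parallelSum, div_le_div_iff₀ (by positivity) (by positivity)]
  nlinarith [mul_nonneg (mul_pos hx hx).le (sub_nonneg.2 hyy')]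

lemma parallelSum_le_parallelSum {x x' y y' : ℝ} (hx : 0 < x) (hy : 0 < y) (hxx' : x ≤ x')
    (hyy' : y ≤ y') : parallelSum x y ≤ parallelSum x' y' :=
  calc parallelSum x y ≤ parallelSum x' y := by
        rw [parallelSum_comm x, parallelSum_comm x']
        exact parallelSum_le_parallelSum_right hy hx hxx'
    _ ≤ parallelSum x' y' := parallelSum_le_parallelSum_right (hx.trans_le hxx') hy hyy'

lemma concaveOn_parallelSum :
    ConcaveOn ℝ (Set.Ioi 0 ×ˢ Set.Ioi 0) (fun p : ℝ × ℝ ↦ parallelSum p.1 p.2) := by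
  refine ⟨(convex_Ioi 0).prod (convex_Ioi 0), ?_⟩
  rintro ⟨x₁, y₁⟩ ⟨hx₁, hy₁⟩ ⟨x₂, y₂⟩ ⟨hx₂, hy₂⟩ a b ha hb hab
  have hx : 0 < a * x₁ + b * x₂ := convex_Ioi (0 : ℝ) hx₁ hx₂ ha hb hab
  have hy : 0 < a * y₁ + b * y₂ := convex_Ioi (0 : ℝ) hy₁ hy₂ ha hb hab
  simp only [Set.mem_Ioi] at hx₁ hy₁ hx₂ hy₂
  obtain rfl : b = 1 - a := by linarith
  simp only [Prod.smul_mk, Prod.mk_add_mk, smul_eq_mul, parallelSum]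
  rw [mul_div_assoc', mul_div_assoc', div_add_div _ _ (by positivity) (by positivity),
    div_le_div_iff₀ (by positivity) (by positivity)]
  nlinarith [mul_nonneg (mul_nonneg ha hb) (sq_nonneg (x₁ * y₂ - x₂ * y₁))]

lemma ConcaveOn.parallelSum {E : Type*} [AddCommMonoid E] [Module ℝ E] {s : Set E}
    {f g : E → ℝ} (hf : ConcaveOn ℝ s f) (hg : ConcaveOn ℝ s g) (hf₀ : ∀ x ∈ s, 0 < f x)
    (hg₀ : ∀ x ∈ s, 0 < g x) : ConcaveOn ℝ s (fun x ↦ _root_.parallelSum (f x) (g x)) := by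
  refine ⟨hf.1, fun x hx y hy a b ha hb hab ↦ ?_⟩
  have hpos : ∀ z ∈ s, (f z, g z) ∈ Set.Ioi (0 : ℝ) ×ˢ Set.Ioi 0 :=
    fun z hz ↦ ⟨hf₀ z hz, hg₀ z hz⟩
  have hcomb := concaveOn_parallelSum.1 (hpos x hx) (hpos y hy) ha hb hab
  calc a • _root_.parallelSum (f x) (g x) + b • _root_.parallelSum (f y) (g y)
      ≤ _root_.parallelSum (a • f x + b • f y) (a • g x + b • g y) :=
        concaveOn_parallelSum.2 (hpos x hx) (hpos y hy) ha hb hab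
    _ ≤ _root_.parallelSum (f (a • x + b • y)) (g (a • x + b • y)) :=
        parallelSum_le_parallelSum hcomb.1 hcomb.2 (hf.2 hx hy ha hb hab) (hg.2 hx hy ha hb hab)

lemma concaveOn_finset_sum {E ι : Type*} [AddCommMonoid E] [Module ℝ E] {s : Set E}
    (hs : Convex ℝ s) (t : Finset ι) {f : ι → E → ℝ} (hf : ∀ i ∈ t, ConcaveOn ℝ s (f i)) :
    ConcaveOn ℝ s (fun x ↦ ∑ i ∈ t, f i x) := by
  simpa only [← Finset.sum_apply] using
    Finset.sum_induction f (ConcaveOn ℝ s) (fun _ _ ↦ ConcaveOn.add) (concaveOn_const 0 hs) hf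

lemma convex_positiveOrthant {ι : Type*} : Convex ℝ {κ : ι → ℝ | ∀ i, 0 < κ i} := by
  simpa [Set.pi] using convex_pi (s := Set.univ) fun i _ ↦ convex_Ioi (0 : ℝ)

section ratio

variable {n : ℕ}

lemma esymmOn_div_eq_sum_parallelSum {s : Finset (Fin n)} {l : ℕ} (hs : l + 2 ≤ s.card)
    {κ : Fin n → ℝ} (hκ : ∀ i, 0 < κ i) :
    esymmOn s (l + 2) κ / esymmOn s (l + 1) κ = ((l : ℝ) + 2)⁻¹ *
      ∑ i ∈ s, parallelSum (κ i) (esymmOn (s.erase i) (l + 1) κ / esymmOn (s.erase i) l κ) := by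
  have hE : 0 < esymmOn s (l + 1) κ := esymmOn_pos (by omega) hκ
  have hterm : ∀ i ∈ s,
      parallelSum (κ i) (esymmOn (s.erase i) (l + 1) κ / esymmOn (s.erase i) l κ) =
        κ i * esymmOn (s.erase i) (l + 1) κ / esymmOn s (l + 1) κ := by
    intro i hi
    have hcard : (s.erase i).card = s.card - 1 := card_erase_of_mem hi
    have hA : 0 < esymmOn (s.erase i) (l + 1) κ := esymmOn_pos (by omega) hκ
    have hB : 0 < esymmOn (s.erase i) l κ := esymmOn_pos (by omega) hκ
    rw [parallelSum, esymmOn_succ_eq_erase hi l κ]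
    field_simp
    ring
  have := sum_mul_esymmOn_erase s (l + 1) κ
  push_cast at this
  rw [sum_congr rfl hterm, ← sum_div, this]
  field_simp
  ring

lemma concaveOn_esymmOn_succ_div {s : Finset (Fin n)} {k : ℕ} (hs : k + 1 ≤ s.card) :
    ConcaveOn ℝ {κ : Fin n → ℝ | ∀ i, 0 < κ i} (fun κ ↦ esymmOn s (k + 1) κ / esymmOn s k κ) := by
  induction k generalizing s with
  | zero =>
    refine (concaveOn_finset_sum convex_positiveOrthant s fun i _ ↦
      (LinearMap.proj i).concaveOn convex_positiveOrthant).congr fun κ _ ↦ ?_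
    simp [esymmOn_one, esymmOn_zero]
  | succ l ih =>
    refine ((concaveOn_finset_sum convex_positiveOrthant s fun i hi ↦ ?_).smul
      (by positivity : (0 : ℝ) ≤ ((l : ℝ) + 2)⁻¹)).congr fun κ hκ ↦
      (esymmOn_div_eq_sum_parallelSum hs hκ).symm
    have hcard : (s.erase i).card = s.card - 1 := card_erase_of_mem hi
    exact ((LinearMap.proj i).concaveOn convex_positiveOrthant).parallelSum
      (ih (by omega)) (fun κ hκ ↦ hκ i)
      fun κ hκ ↦ div_pos (esymmOn_pos (by omega) hκ) (esymmOn_pos (by omega) hκ)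

end ratio

/-- σ_k/σ_{k-1} is concave on the positive cone Γ₊. -/
theorem stmt5 {n k : ℕ} (hk1 : 1 ≤ k) (hk : k ≤ n) :
    ConcaveOn ℝ {κ : Fin n → ℝ | ∀ i, 0 < κ i}
      (fun κ => esymm k κ / esymm (k - 1) κ) := by
  obtain ⟨m, rfl⟩ := Nat.exists_eq_add_of_le' hk1
  simpa [esymm] using concaveOn_esymmOn_succ_div (s := univ) (k := m) (by simpa using hk)
end
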